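/- Let ε ∈ [0,1) and write ε̄ = 1 − ε. Then the maximum of the function δ ↦ H₂(δ) / (1/(1−ε) + ε̄ + δ) over the interval [0,1] equals its maximum over the subinterval [1/3, 1/2]; i.e., max over {δ ∈ [0,1]} of H₂(δ)/(1/(1−ε)+ε̄+δ) = max over {δ ∈ [1/3, 1/2]} of H₂(δ)/(1/(1−ε)+ε̄+δ). -/

import Mathlib

/-- The binary entropy function (base 2), with `H2 0 = H2 1 = 0`. -/
noncomputable def H2 (x : ℝ) : ℝ := -(x * Real.logb 2 x) - (1 - x) * Real.logb 2 (1 - x)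

/-!
A point `δ > 1/2` is dominated by `1 - δ`: by the symmetry `H2 (1 - δ) = H2 δ` it has the same
numerator and a smaller denominator. On `[0, 1/3]` the quotient `H2 δ / (c + δ)` is increasing
as soon as `c ≥ 1`, and here `c = 1/(1-ε) + (1-ε) ≥ 2` by AM-GM. So every value on `[0, 1]` is
dominated by one on `[1/3, 1/2]`, where the maximum is attained by compactness.
-/

open Real Set

lemma H2_eq_binEntropy_div_log_two (x : ℝ) : H2 x = binEntropy x / log 2 := by
  simp only [H2, binEntropy, logb, log_inv]
  ring

lemma H2_one_sub (x : ℝ) : H2 (1 - x) = H2 x := by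
  simp only [H2_eq_binEntropy_div_log_two, binEntropy_one_sub]

lemma H2_nonneg {x : ℝ} (h0 : 0 ≤ x) (h1 : x ≤ 1) : 0 ≤ H2 x := by
  rw [H2_eq_binEntropy_div_log_two]
  exact div_nonneg (binEntropy_nonneg h0 h1) (log_nonneg one_le_two)

lemma H2_le_one (x : ℝ) : H2 x ≤ 1 := by
  rw [H2_eq_binEntropy_div_log_two, div_le_one (log_pos one_lt_two)]
  exact binEntropy_le_log_two

lemma continuous_H2 : Continuous H2 := by
  simp only [funext H2_eq_binEntropy_div_log_two]
  fun_prop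

lemma hasDerivAt_H2 {x : ℝ} (h0 : x ≠ 0) (h1 : x ≠ 1) :
    HasDerivAt H2 (logb 2 (1 - x) - logb 2 x) x := by
  simp only [funext H2_eq_binEntropy_div_log_two, logb, ← sub_div]
  exact (hasDerivAt_binEntropy h0 h1).div_const _

lemma one_le_logb_two_one_sub_sub_logb_two {x : ℝ} (h0 : 0 < x) (h3 : x ≤ 1 / 3) :
    1 ≤ logb 2 (1 - x) - logb 2 x := by
  have h : logb 2 (2 * x) ≤ logb 2 (1 - x) :=
    logb_le_logb_of_le one_lt_two (by positivity) (by linarith)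
  rw [logb_mul two_ne_zero h0.ne', logb_self_eq_one one_lt_two] at h
  linarith

lemma two_le_inv_add_self {t : ℝ} (ht : 0 < t) : 2 ≤ t⁻¹ + t := by
  rw [← sub_nonneg]
  have : t⁻¹ + t - 2 = (t - 1) ^ 2 / t := by field_simp; ring
  rw [this]
  positivity

lemma IsGreatest.image_of_forall_exists_le {α β : Type*} [Preorder β] {f : α → β} {s t : Set α}
    {M : β} (hM : IsGreatest (f '' s) M) (hst : s ⊆ t) (hle : ∀ x ∈ t, ∃ y ∈ s, f x ≤ f y) :
    IsGreatest (f '' t) M := by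
  refine ⟨image_mono hst hM.1, ?_⟩
  rintro _ ⟨x, hx, rfl⟩
  obtain ⟨y, hy, hxy⟩ := hle x hx
  exact hxy.trans (hM.2 (mem_image_of_mem f hy))

section

variable {c : ℝ}

lemma continuousOn_H2_div_add (hc : 0 < c) : ContinuousOn (fun δ => H2 δ / (c + δ)) (Ici 0) :=
  continuous_H2.continuousOn.div (by fun_prop) fun x hx => by
    have : (0 : ℝ) ≤ x := hx
    positivity

lemma H2_div_add_le_H2_one_sub_div_add (hc : 0 < c) {δ : ℝ} (h2 : 1 / 2 ≤ δ) (h1 : δ ≤ 1) :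
    H2 δ / (c + δ) ≤ H2 (1 - δ) / (c + (1 - δ)) := by
  rw [H2_one_sub]
  exact div_le_div_of_nonneg_left (H2_nonneg (by linarith) h1) (by linarith) (by linarith)

/-- The quotient-rule numerator `H2' δ * (c + δ) - H2 δ` is positive because `H2' ≥ 1`
on `(0, 1/3]`, `H2 ≤ 1` and `c + δ > 1`. -/
lemma strictMonoOn_H2_div_add (hc : 1 ≤ c) :
    StrictMonoOn (fun δ => H2 δ / (c + δ)) (Icc 0 (1 / 3)) := by
  refine strictMonoOn_of_deriv_pos (convex_Icc _ _)
    ((continuousOn_H2_div_add (by linarith)).mono fun x hx => hx.1) fun x hx => ?_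
  rw [interior_Icc] at hx
  obtain ⟨hx0, hx3⟩ := hx
  have hD : HasDerivAt (fun δ => H2 δ / (c + δ)) _ x :=
    (hasDerivAt_H2 hx0.ne' (by linarith)).div ((hasDerivAt_id' x).const_add c) (by linarith)
  rw [hD.deriv]
  have hslope := one_le_logb_two_one_sub_sub_logb_two hx0 hx3.le
  have hH2 := H2_le_one x
  apply div_pos _ (by positivity)
  nlinarith

lemma exists_mem_Icc_third_half_H2_div_add_le (hc : 1 ≤ c) {δ : ℝ} (hδ : δ ∈ Icc (0 : ℝ) 1) :
    ∃ δ' ∈ Icc (1 / 3 : ℝ) (1 / 2), H2 δ / (c + δ) ≤ H2 δ' / (c + δ') := by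
  obtain ⟨h0, h1⟩ := hδ
  rcases lt_or_ge δ (1 / 3) with h3 | h3
  · exact ⟨1 / 3, by norm_num,
      (strictMonoOn_H2_div_add hc).monotoneOn ⟨h0, h3.le⟩ (by norm_num) h3.le⟩
  rcases le_or_gt δ (1 / 2) with h2 | h2
  · exact ⟨δ, ⟨h3, h2⟩, le_rfl⟩
  rcases lt_or_ge (1 - δ) (1 / 3) with h3' | h3'
  · exact ⟨1 / 3, by norm_num, (H2_div_add_le_H2_one_sub_div_add (by linarith) h2.le h1).trans
      ((strictMonoOn_H2_div_add hc).monotoneOn ⟨by linarith, h3'.le⟩ (by norm_num) h3'.le)⟩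
  · exact ⟨1 - δ, ⟨h3', by linarith⟩, H2_div_add_le_H2_one_sub_div_add (by linarith) h2.le h1⟩

end

/-- Let `ε ∈ [0,1)` and `ε̄ = 1−ε`.  The maximum of `δ ↦ H₂(δ)/(1/(1−ε) + ε̄ + δ)` over
`[0,1]` equals its maximum over the subinterval `[1/3, 1/2]`. -/
theorem max_on_unit_interval_eq_max_on_third_half
    (ε : ℝ) (hε : ε ∈ Set.Ico (0 : ℝ) 1) :
    ∃ M : ℝ,
      IsGreatest
        ((fun δ : ℝ => H2 δ / (1 / (1 - ε) + (1 - ε) + δ)) '' Set.Icc 0 1) M ∧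
      IsGreatest
        ((fun δ : ℝ => H2 δ / (1 / (1 - ε) + (1 - ε) + δ)) '' Set.Icc (1 / 3) (1 / 2)) M := by
  have hc : 1 ≤ 1 / (1 - ε) + (1 - ε) := by
    rw [one_div]
    linarith [two_le_inv_add_self (sub_pos.2 hε.2)]
  have hcont :
      ContinuousOn (fun δ => H2 δ / (1 / (1 - ε) + (1 - ε) + δ)) (Icc (1 / 3) (1 / 2)) :=
    (continuousOn_H2_div_add (by linarith)).mono fun x hx => le_trans (by norm_num) hx.1
  obtain ⟨M, hM⟩ := (isCompact_Icc.image_of_continuousOn hcont).exists_isGreatest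
    ((nonempty_Icc.2 (by norm_num)).image _)
  exact ⟨M, hM.image_of_forall_exists_le (Icc_subset_Icc (by norm_num) (by norm_num))
    fun δ hδ => exists_mem_Icc_third_half_H2_div_add_le hc hδ, hM⟩
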